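/- For a pair partition π of {1,…,k} (k even) and l < h(π), where h(π) := #{blocks {i,j} of π, i<j, with j = i+1 or π|_{{i+1,…,j−1}} a pair partition}, the set B_n^{(l)}(π) of π-consistent tuples with exactly l 'matched' blocks and all matched blocks nested satisfies #B_n^{(l)}(π) ≤ C·n^{k/2}, hence lim_{n→∞} #B_n^{(l)}(π)/n^{k/2+1} = 0. -/

import Mathlib

open Finset Filter

/-- `i ∼_π j`: `i` and `j` lie in the same block of the partition `π`. -/
def sameBlock {k : ℕ} (P : Finpartition (Finset.univ : Finset (Fin k))) (i j : Fin k) : Prop :=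
  ∃ b ∈ P.parts, i ∈ b ∧ j ∈ b

/-- `S_n(π)`: tuples `(p 1, …, p k) ∈ {1,…,n}^k` with
`p i + p (i+1) = p j + p (j+1) ↔ i ∼_π j` (indices cyclic). -/
def consistentSet (k n : ℕ) [NeZero k] (P : Finpartition (Finset.univ : Finset (Fin k))) :
    Set (Fin k → ℕ) :=
  {p | (∀ i, 1 ≤ p i ∧ p i ≤ n) ∧
    ∀ i j : Fin k, p i + p (i + 1) = p j + p (j + 1) ↔ sameBlock P i j}

/-- The restriction of `π` to the open interval `{i+1, …, j-1}` is a pair partition: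
every block meeting the interval is contained in it. -/
def interiorPaired {k : ℕ} (P : Finpartition (Finset.univ : Finset (Fin k)))
    (i j : Fin k) : Prop :=
  ∀ b ∈ P.parts, (∃ x ∈ b, (i : ℕ) < (x : ℕ) ∧ (x : ℕ) < (j : ℕ)) →
    ∀ x ∈ b, (i : ℕ) < (x : ℕ) ∧ (x : ℕ) < (j : ℕ)

/-- `P_i = P_j` or `P_i = P̄_j`, where `P_l = (p l, p (l+1))`. -/
def matchedPair {k : ℕ} [NeZero k] (p : Fin k → ℕ) (i j : Fin k) : Prop :=
  (p i = p j ∧ p (i + 1) = p (j + 1)) ∨ (p i = p (j + 1) ∧ p (i + 1) = p j)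

/-- `m(P_1,…,P_k)`: the number of matched index pairs `i < j`. -/
noncomputable def mcount {k : ℕ} [NeZero k] (p : Fin k → ℕ) : ℕ :=
  Set.ncard {ij : Fin k × Fin k | ij.1 < ij.2 ∧ matchedPair p ij.1 ij.2}

/-- All matched pairs are nested: `j = i+1` or `π|_{i+1,…,j-1}` is a pair partition. -/
def nestedMatches {k : ℕ} [NeZero k] (P : Finpartition (Finset.univ : Finset (Fin k)))
    (p : Fin k → ℕ) : Prop :=
  ∀ i j : Fin k, i < j → matchedPair p i j →
    ((j : ℕ) = (i : ℕ) + 1 ∨ interiorPaired P i j)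

/-- The height `h(π)`: the number of blocks `{i,j}`, `i < j`, with `j = i+1` or
`π|_{i+1,…,j-1}` a pair partition. -/
noncomputable def height {k : ℕ} (P : Finpartition (Finset.univ : Finset (Fin k))) : ℕ :=
  Set.ncard {b : Finset (Fin k) | b ∈ P.parts ∧ ∃ i j : Fin k, i < j ∧ b = {i, j} ∧
    ((j : ℕ) = (i : ℕ) + 1 ∨ interiorPaired P i j)}

/-- `B_n^(l)(π)`: π-consistent tuples with exactly `l` matched pairs, all nested. -/
def Bset (k n l : ℕ) [NeZero k] (P : Finpartition (Finset.univ : Finset (Fin k))) :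
    Set (Fin k → ℕ) :=
  {p | p ∈ consistentSet k n P ∧ mcount p = l ∧ nestedMatches P p}

/-! Write `s x = p x + p (x + 1)`. Consistency says that `s` is constant exactly on the blocks of
`π`, and `∑ x, (-1)^x s x` telescopes: to `0` around the whole cycle (`k` is even) and to
`±(p (i + 1) - p j)` over `i < x < j`.

If every block `{x, y}` has `x + y` odd, the two terms of each block cancel in the alternating
sum. For a block `{i, j}` counted by `h(π)` the interval `i < x < j` is a union of blocks, so
`p (i + 1) = p j`, and then `p i = p (j + 1)`: the block is matched. Hence `mcount p ≥ h(π) > l` and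
`B_n^(l)(π)` is empty.

Otherwise some block `{u, v}` has `u + v` even. Then the vanishing of the full alternating sum
determines `s u` from the values of `s` on the other `m - 1` blocks, and `p` is determined by `p 0`
and `s`, so already `#S_n(π) ≤ n (2n + 1)^(m - 1)`. -/

open Fin.NatCast

lemma Finset.exists_card_le_forall_exists_mem {α : Type*} (S : Finset (Finset α))
    (hS : ∀ b ∈ S, b.Nonempty) : ∃ T : Finset α, T.card ≤ S.card ∧ ∀ b ∈ S, ∃ t ∈ T, t ∈ b := by
  classical
  choose f hf using hS
  exact ⟨S.attach.image fun b => f b.1 b.2, card_image_le.trans card_attach.le,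
    fun b hb => ⟨f b hb, mem_image_of_mem _ (mem_attach _ ⟨b, hb⟩), hf b hb⟩⟩

lemma neg_one_pow_eq_neg_one_pow_add_mul (a b : ℕ) :
    ((-1 : ℤ)) ^ b = (-1) ^ (a + b) * (-1) ^ a := by
  rw [← pow_add, show a + b + a = b + 2 * a by ring, pow_add, pow_mul]
  simp

lemma neg_one_pow_eq_of_even_add {a b : ℕ} (h : Even (a + b)) :
    ((-1 : ℤ)) ^ b = (-1) ^ a := by
  rw [neg_one_pow_eq_neg_one_pow_add_mul a b, h.neg_one_pow, one_mul]

lemma neg_one_pow_eq_neg_of_odd_add {a b : ℕ} (h : Odd (a + b)) :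
    ((-1 : ℤ)) ^ b = -(-1) ^ a := by
  rw [neg_one_pow_eq_neg_one_pow_add_mul a b, h.neg_one_pow, neg_one_mul]

section EdgeSums

variable {k : ℕ} [NeZero k]

lemma eq_of_edgeSums_eq {p q : Fin k → ℕ} (h0 : p 0 = q 0)
    (h : ∀ x, p x + p (x + 1) = q x + q (x + 1)) : p = q := by
  have hnat : ∀ t : ℕ, p t = q t := by
    intro t
    induction t with
    | zero => simpa using h0
    | succ t ih =>
      have := h t
      rw [Nat.cast_succ]
      omega
  funext x
  simpa using hnat x

def signedEdgeSum (p : Fin k → ℕ) (x : Fin k) : ℤ := (-1) ^ (x : ℕ) * ((p x : ℤ) + p (x + 1))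

private def signedValue (p : Fin k → ℕ) (t : ℕ) : ℤ := (-1) ^ t * (p t : ℤ)

private lemma signedEdgeSum_eq_sub (p : Fin k → ℕ) (x : Fin k) :
    signedEdgeSum p x = signedValue p x - signedValue p ((x : ℕ) + 1) := by
  simp only [signedEdgeSum, signedValue, Nat.cast_succ, Fin.cast_val_eq_self, pow_succ]
  ring

lemma sum_Ioo_signedEdgeSum (p : Fin k → ℕ) {i j : Fin k} (hij : i < j) :
    ∑ x ∈ Ioo i j, signedEdgeSum p x =
      (-1) ^ ((i : ℕ) + 1) * (p (i + 1) : ℤ) - (-1) ^ (j : ℕ) * (p j : ℤ) := by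
  have hsum := Finset.sum_Ico_sub (signedValue p) (show (i : ℕ) + 1 ≤ j from hij)
  rw [Finset.Ico_add_one_left_eq_Ioo, ← Fin.map_valEmbedding_Ioo, Finset.sum_map] at hsum
  calc ∑ x ∈ Ioo i j, signedEdgeSum p x
      = -(signedValue p j - signedValue p ((i : ℕ) + 1)) := by
        rw [← hsum, ← Finset.sum_neg_distrib]
        exact Finset.sum_congr rfl fun x _ => by rw [signedEdgeSum_eq_sub, neg_sub]; rfl
    _ = _ := by simp [signedValue]

lemma sum_signedEdgeSum_eq_zero (hk : Even k) (p : Fin k → ℕ) :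
    ∑ x, signedEdgeSum p x = 0 := by
  simp only [signedEdgeSum_eq_sub]
  rw [Fin.sum_univ_eq_sum_range (fun t => signedValue p t - signedValue p (t + 1)),
    Finset.sum_range_sub']
  simp [signedValue, hk.neg_one_pow]

lemma edgeSum_eq_of_eq_off (hk : Even k) {p q : Fin k → ℕ} {u v : Fin k} (huv : u ≠ v)
    (heven : Even ((u : ℕ) + v)) (hp : p u + p (u + 1) = p v + p (v + 1))
    (hq : q u + q (u + 1) = q v + q (v + 1))
    (hoff : ∀ x, x ≠ u → x ≠ v → p x + p (x + 1) = q x + q (x + 1)) :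
    p u + p (u + 1) = q u + q (u + 1) := by
  set d := fun x => signedEdgeSum p x - signedEdgeSum q x
  have hsum : ∑ x, d x = d u + d v :=
    sum_eq_add_of_mem u v (mem_univ u) (mem_univ v) huv fun x _ ⟨hxu, hxv⟩ => by
      simp only [d, signedEdgeSum]
      rw [show (p x : ℤ) + p (x + 1) = q x + q (x + 1) by exact_mod_cast hoff x hxu hxv, sub_self]
  have hdv : d v = d u := by
    simp only [d, signedEdgeSum]
    rw [neg_one_pow_eq_of_even_add heven, show (p v : ℤ) + p (v + 1) = p u + p (u + 1) by
      exact_mod_cast hp.symm, show (q v : ℤ) + q (v + 1) = q u + q (u + 1) by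
      exact_mod_cast hq.symm]
  have hdu : d u = 0 := by
    rw [sum_sub_distrib, sum_signedEdgeSum_eq_zero hk, sum_signedEdgeSum_eq_zero hk, hdv] at hsum
    linarith
  simp only [d, signedEdgeSum, ← mul_sub] at hdu
  exact_mod_cast sub_eq_zero.1 ((mul_eq_zero.1 hdu).resolve_left (pow_ne_zero _ (by norm_num)))

lemma ncard_le_of_edgeSums_injective {n : ℕ} (T : Finset (Fin k)) {S : Set (Fin k → ℕ)}
    (hS : ∀ p ∈ S, ∀ x, 1 ≤ p x ∧ p x ≤ n)
    (hinj : ∀ p ∈ S, ∀ q ∈ S, p 0 = q 0 →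
      (∀ t ∈ T, p t + p (t + 1) = q t + q (t + 1)) → p = q) :
    S.ncard ≤ n * (2 * n + 1) ^ T.card := by
  let G := Icc 1 n ×ˢ Fintype.piFinset fun _ : T => range (2 * n + 1)
  calc S.ncard ≤ (G : Set (ℕ × (T → ℕ))).ncard := by
        refine Set.ncard_le_ncard_of_injOn (fun p => (p 0, fun t : T => p t + p (t + 1)))
          (fun p hp => ?_) (fun p hp q hq h => ?_)
        · simp only [G, coe_product, Set.mem_prod, mem_coe, mem_Icc, Fintype.coe_piFinset,
            Set.mem_pi, Set.mem_univ, coe_range, Set.mem_Iio, forall_const]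
          refine ⟨hS p hp 0, fun t => ?_⟩
          have := hS p hp t; have := hS p hp (t + 1)
          omega
        · simp only [Prod.mk.injEq, funext_iff] at h
          exact hinj p hp q hq h.1 fun t ht => h.2 ⟨t, ht⟩
    _ = n * (2 * n + 1) ^ T.card := by
        rw [Set.ncard_coe_finset, card_product, Fintype.card_piFinset]
        simp

end EdgeSums

section PairPartition

variable {k : ℕ} (P : Finpartition (univ : Finset (Fin k)))

lemma sameBlock_iff_mem_part {x y : Fin k} : sameBlock P x y ↔ y ∈ P.part x := by
  rw [P.mem_part_iff_exists]
  exact exists_congr fun b => and_congr_right fun _ => and_comm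

lemma exists_partner (hpair : ∀ b ∈ P.parts, b.card = 2) (x : Fin k) :
    ∃ y, y ≠ x ∧ P.part x = {x, y} := by
  have hx : x ∈ P.part x := P.mem_part (mem_univ x)
  obtain ⟨y, hy⟩ := card_eq_one.1 <| by
    rw [card_erase_of_mem hx, hpair _ (P.part_mem.2 (mem_univ x))]
  exact ⟨y, (mem_erase.1 (hy ▸ mem_singleton_self y)).1, by rw [← hy, insert_erase hx]⟩

variable [NeZero k]

lemma sum_signedEdgeSum_eq_zero_of_closed (hpair : ∀ b ∈ P.parts, b.card = 2)
    (hodd : ∀ x y : Fin k, x ≠ y → sameBlock P x y → Odd ((x : ℕ) + y)) {p : Fin k → ℕ}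
    (hp : ∀ x y, sameBlock P x y → p x + p (x + 1) = p y + p (y + 1)) {A : Finset (Fin k)}
    (hA : ∀ x ∈ A, ∀ y, sameBlock P x y → y ∈ A) :
    ∑ x ∈ A, signedEdgeSum p x = 0 := by
  choose pt hne hpart using exists_partner P hpair
  have hsame : ∀ x, sameBlock P x (pt x) := fun x => by
    rw [sameBlock_iff_mem_part, hpart]; simp
  have hinv : ∀ x, pt (pt x) = x := by
    intro x
    have h : pt (pt x) ∈ P.part x := by
      rw [← P.part_eq_of_mem (P.part_mem.2 (mem_univ x))
        ((sameBlock_iff_mem_part P).1 (hsame x)), hpart (pt x)]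
      simp
    rw [hpart x, mem_insert, mem_singleton] at h
    exact h.resolve_right (hne _)
  refine sum_involution (fun x _ => pt x) (fun x _ => ?_) (fun x _ _ => hne x)
    (fun x hx => hA x hx _ (hsame x)) (fun x _ => hinv x)
  have hsum : (p (pt x) : ℤ) + p (pt x + 1) = p x + p (x + 1) := by
    exact_mod_cast (hp x (pt x) (hsame x)).symm
  rw [signedEdgeSum, signedEdgeSum, hsum,
    neg_one_pow_eq_neg_of_odd_add (hodd x (pt x) (hne x).symm (hsame x))]
  ring

lemma matchedPair_of_nested (hpair : ∀ b ∈ P.parts, b.card = 2)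
    (hodd : ∀ x y : Fin k, x ≠ y → sameBlock P x y → Odd ((x : ℕ) + y)) {p : Fin k → ℕ}
    (hp : ∀ x y, sameBlock P x y → p x + p (x + 1) = p y + p (y + 1)) {i j : Fin k}
    (hij : i < j) (hb : {i, j} ∈ P.parts) (hnest : (j : ℕ) = i + 1 ∨ interiorPaired P i j) :
    matchedPair p i j := by
  have hsame : sameBlock P i j := ⟨{i, j}, hb, by simp, by simp⟩
  have hclosed : ∀ x ∈ Ioo i j, ∀ y, sameBlock P x y → y ∈ Ioo i j := by
    rintro x hx y ⟨b, hb, hxb, hyb⟩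
    rw [mem_Ioo] at hx ⊢
    rcases hnest with hj | hint
    · simp only [Fin.lt_def] at hx
      omega
    · exact hint b hb ⟨x, hxb, hx⟩ y hyb
  have htel := sum_Ioo_signedEdgeSum p hij
  rw [sum_signedEdgeSum_eq_zero_of_closed P hpair hodd hp hclosed,
    neg_one_pow_eq_of_even_add (a := (i : ℕ) + 1) (b := j) ?_] at htel
  · have hinner : p (i + 1) = p j := by
      have := mul_left_cancel₀ (pow_ne_zero (i + 1 : ℕ) (by norm_num : (-1 : ℤ) ≠ 0))
        (sub_eq_zero.1 htel.symm)
      exact_mod_cast this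
    have := hp i j hsame
    exact Or.inr ⟨by omega, hinner⟩
  · have := (hodd i j hij.ne hsame).add_one
    rwa [add_right_comm] at this

lemma height_le_mcount {p : Fin k → ℕ}
    (hmatch : ∀ i j : Fin k, i < j → {i, j} ∈ P.parts →
      ((j : ℕ) = i + 1 ∨ interiorPaired P i j) → matchedPair p i j) :
    height P ≤ mcount p := by
  refine (Set.ncard_le_ncard ?_ (Set.toFinite _)).trans
    (Set.ncard_image_le (f := fun ij : Fin k × Fin k => ({ij.1, ij.2} : Finset (Fin k)))
      (Set.toFinite _))
  rintro b ⟨hb, i, j, hij, rfl, hnest⟩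
  exact ⟨(i, j), ⟨hij, hmatch i j hij hb hnest⟩, rfl⟩

lemma Bset_eq_empty_of_odd (hpair : ∀ b ∈ P.parts, b.card = 2)
    (hodd : ∀ x y : Fin k, x ≠ y → sameBlock P x y → Odd ((x : ℕ) + y)) {n l : ℕ}
    (hl : l < height P) : Bset k n l P = ∅ := by
  refine Set.eq_empty_iff_forall_notMem.2 ?_
  rintro p ⟨⟨-, hp⟩, rfl, -⟩
  exact (height_le_mcount P fun i j hij hb hnest =>
    matchedPair_of_nested P hpair hodd (fun x y h => (hp x y).2 h) hij hb hnest).not_gt hl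

end PairPartition

lemma finite_consistentSet {k n : ℕ} [NeZero k] (P : Finpartition (univ : Finset (Fin k))) :
    (consistentSet k n P).Finite :=
  (Set.Finite.pi fun _ => Set.finite_Icc 1 n).subset fun _ hp =>
    Set.mem_univ_pi.2 fun i => hp.1 i

lemma card_parts_of_pair {m : ℕ} (P : Finpartition (univ : Finset (Fin (2 * m))))
    (hpair : ∀ b ∈ P.parts, b.card = 2) : P.parts.card = m := by
  have h := P.sum_card_parts
  rw [sum_congr rfl hpair, sum_const, smul_eq_mul, card_univ, Fintype.card_fin] at h
  omega

lemma Bset_subset_consistentSet {k n l : ℕ} [NeZero k] (P : Finpartition (univ : Finset (Fin k))) :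
    Bset k n l P ⊆ consistentSet k n P :=
  fun _ hp => hp.1

lemma ncard_consistentSet_le {m n : ℕ} [NeZero (2 * m)]
    (P : Finpartition (univ : Finset (Fin (2 * m)))) (hpair : ∀ b ∈ P.parts, b.card = 2)
    {u v : Fin (2 * m)} (huv : u ≠ v) (hsame : sameBlock P u v) (heven : Even ((u : ℕ) + v)) :
    (consistentSet (2 * m) n P).ncard ≤ n * (2 * n + 1) ^ (m - 1) := by
  have hpart : P.part u = {u, v} := by
    obtain ⟨w, -, hw⟩ := exists_partner P hpair u
    have hv := (sameBlock_iff_mem_part P).1 hsame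
    rw [hw, mem_insert, mem_singleton] at hv
    rw [hw, hv.resolve_left huv.symm]
  obtain ⟨T, hTcard, hT⟩ := (P.parts.erase (P.part u)).exists_card_le_forall_exists_mem
    fun b hb => P.nonempty_of_mem_parts (mem_of_mem_erase hb)
  rw [card_erase_of_mem (P.part_mem.2 (mem_univ u)), card_parts_of_pair P hpair] at hTcard
  refine (ncard_le_of_edgeSums_injective T (fun p hp => hp.1) ?_).trans
    (Nat.mul_le_mul_left _ (Nat.pow_le_pow_right (by omega) hTcard))
  rintro p ⟨-, hp⟩ q ⟨-, hq⟩ h0 hTeq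
  have hoff : ∀ x, x ≠ u → x ≠ v → p x + p (x + 1) = q x + q (x + 1) := by
    intro x hxu hxv
    have hx : P.part x ∈ P.parts.erase (P.part u) := by
      refine mem_erase.2 ⟨fun h => ?_, P.part_mem.2 (mem_univ x)⟩
      have hx := P.mem_part (mem_univ x)
      rw [h, hpart] at hx
      simp [hxu, hxv] at hx
    obtain ⟨t, ht, hxt⟩ := hT _ hx
    have := (hp x t).2 ((sameBlock_iff_mem_part P).2 hxt)
    have := (hq x t).2 ((sameBlock_iff_mem_part P).2 hxt)
    have := hTeq t ht
    omega
  have hu := edgeSum_eq_of_eq_off (even_two_mul m) huv heven ((hp u v).2 hsame)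
    ((hq u v).2 hsame) hoff
  refine eq_of_edgeSums_eq h0 fun x => ?_
  by_cases hxu : x = u
  · exact hxu ▸ hu
  by_cases hxv : x = v
  · have := (hp u v).2 hsame
    have := (hq u v).2 hsame
    subst hxv
    omega
  exact hoff x hxu hxv

lemma mul_two_mul_add_one_pow_pred_le {m : ℕ} (hm : m ≠ 0) (n : ℕ) :
    n * (2 * n + 1) ^ (m - 1) ≤ 3 ^ m * n ^ m := by
  obtain ⟨m, rfl⟩ := Nat.exists_eq_succ_of_ne_zero hm
  rcases n.eq_zero_or_pos with rfl | hn
  · simp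
  calc n * (2 * n + 1) ^ m ≤ n * (3 * n) ^ m := by gcongr; omega
    _ ≤ 3 ^ (m + 1) * n ^ (m + 1) := by
        rw [mul_pow, pow_succ, pow_succ]
        nlinarith [Nat.zero_le (3 ^ m * n ^ m)]

lemma tendsto_div_pow_succ_of_le_mul_pow {f : ℕ → ℝ} {C : ℝ} {m : ℕ} (hf0 : ∀ n, 0 ≤ f n)
    (hf : ∀ n, f n ≤ C * (n : ℝ) ^ m) :
    Tendsto (fun n => f n / (n : ℝ) ^ (m + 1)) atTop (nhds 0) := by
  have hO : f =O[atTop] fun n : ℕ => (n : ℝ) ^ m :=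
    Asymptotics.IsBigO.of_bound C (Eventually.of_forall fun n => by
      simpa [abs_of_nonneg (hf0 n)] using hf n)
  have ho : (fun n : ℕ => (n : ℝ) ^ m) =o[atTop] fun n : ℕ => (n : ℝ) ^ (m + 1) :=
    (Asymptotics.isLittleO_pow_pow_atTop_of_lt (lt_add_one m)).comp_tendsto
      tendsto_natCast_atTop_atTop
  exact (hO.trans_isLittleO ho).tendsto_div_nhds_zero

/-- For a pair partition `π` of `{1,…,k}`, `k = 2m`, and `l < h(π)`,
`#B_n^(l)(π) ≤ C n^(k/2)`, hence `#B_n^(l)(π)/n^(k/2+1) → 0`. -/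
theorem stmt12 (m : ℕ) [NeZero (2 * m)]
    (P : Finpartition (Finset.univ : Finset (Fin (2 * m))))
    (hpair : ∀ b ∈ P.parts, b.card = 2)
    (l : ℕ) (hl : l < height P) :
    (∃ C : ℝ, ∀ n : ℕ, ((Bset (2 * m) n l P).ncard : ℝ) ≤ C * (n : ℝ) ^ m) ∧
      Tendsto (fun n : ℕ => ((Bset (2 * m) n l P).ncard : ℝ) / (n : ℝ) ^ (m + 1))
        atTop (nhds 0) := by
  have hm : m ≠ 0 := by
    have := NeZero.ne (2 * m)
    omega
  have hbound : ∀ n : ℕ, ((Bset (2 * m) n l P).ncard : ℝ) ≤ 3 ^ m * (n : ℝ) ^ m := by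
    intro n
    by_cases hodd : ∀ x y : Fin (2 * m), x ≠ y → sameBlock P x y → Odd ((x : ℕ) + y)
    · rw [Bset_eq_empty_of_odd P hpair hodd hl, Set.ncard_empty, Nat.cast_zero]
      positivity
    · push Not at hodd
      obtain ⟨u, v, huv, hsame, heven⟩ := hodd
      have hB := Set.ncard_le_ncard (Bset_subset_consistentSet (n := n) (l := l) P)
        (finite_consistentSet P)
      exact_mod_cast hB.trans <|
        (ncard_consistentSet_le P hpair huv hsame (Nat.not_odd_iff_even.1 heven)).trans
          (mul_two_mul_add_one_pow_pred_le hm n)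
  exact ⟨⟨3 ^ m, hbound⟩, tendsto_div_pow_succ_of_le_mul_pow (fun n => Nat.cast_nonneg _) hbound⟩
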